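/- arXiv:1504.07788 — 2 statements merged into one kernel-verified Lean document; each statement's English description precedes it below -/
import Mathlib

section
/- If (M, Δ) is a Garside monoid, then the left domino rule is valid for Δ-normal words of length two: whenever s_1, s_2, s'_1, s'_2, t_0, t_1, t_2 lie in Div(Δ) and satisfy s'_1 t_1 = t_0 s_1 and s'_2 t_2 = t_1 s_2 in M, if the words s_1|s_2, s'_1|t_1 and s'_2|t_2 are Δ-normal, then s'_1|s'_2 is Δ-normal. -/
/-!
Normality of `a|b` says that `a` is the `Δ`-head of `a b`: every divisor of `Δ` left-dividing
`a b` already left-divides `a`. Let `s ∈ Div(Δ)` left-divide `s'₁ s'₂`. Then `s` left-divides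
`s'₁ s'₂ t₂ = t₀ s₁ s₂`, hence so does the right-lcm `t₀ u` of `t₀` and `s`. As `t₀ u` divides `Δ`,
so does `u`, and `u ≼ s₁ s₂` gives `u ≼ s₁`. Thus `s ≼ t₀ s₁ = s'₁ t₁`, and normality of `s'₁|t₁`
gives `s ≼ s'₁`.
-/

/-- Left-divisibility: `f ≼ g` iff `f * c = g` for some `c`. -/
def LDvd {M : Type*} [Monoid M] (f g : M) : Prop := ∃ c, f * c = g

/-- Right-divisibility: `f` right-divides `g` iff `c * f = g` for some `c`. -/
def RDvd {M : Type*} [Monoid M] (f g : M) : Prop := ∃ c, c * f = g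

/-- A Garside monoid: a cancellative monoid `M` together with a Garside element `Δ`,
satisfying conditions (i)–(iv) of the definition. -/
structure GarsideMonoid (M : Type*) [Monoid M] where
  /-- The Garside element. -/
  Δ : M
  mul_left_cancel : ∀ a b c : M, a * b = a * c → b = c
  mul_right_cancel : ∀ a b c : M, b * a = c * a → b = c
  /-- (i) a superadditive length-type map. -/
  lam : M → ℕ
  lam_superadd : ∀ f g : M, lam f + lam g ≤ lam (f * g)
  lam_ne_zero : ∀ g : M, g ≠ 1 → lam g ≠ 0
  /-- (ii) any two elements admit a left-gcd. -/
  exists_left_gcd : ∀ f g : M, ∃ d, LDvd d f ∧ LDvd d g ∧ ∀ e, LDvd e f → LDvd e g → LDvd e d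
  /-- (ii) any two elements admit a right-lcm. -/
  exists_right_lcm : ∀ f g : M, ∃ m, LDvd f m ∧ LDvd g m ∧ ∀ e, LDvd f e → LDvd g e → LDvd m e
  /-- (ii) any two elements admit a right-gcd. -/
  exists_right_gcd : ∀ f g : M, ∃ d, RDvd d f ∧ RDvd d g ∧ ∀ e, RDvd e f → RDvd e g → RDvd e d
  /-- (ii) any two elements admit a left-lcm. -/
  exists_left_lcm : ∀ f g : M, ∃ m, RDvd f m ∧ RDvd g m ∧ ∀ e, RDvd f e → RDvd g e → RDvd m e
  /-- (iii) the left- and right-divisors of `Δ` coincide. -/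
  ldvd_iff_rdvd : ∀ d : M, LDvd d Δ ↔ RDvd d Δ
  /-- (iii) the divisors of `Δ` generate `M`. -/
  closure_div : Submonoid.closure {d : M | LDvd d Δ} = ⊤
  /-- (iv) `Div(Δ)` is finite. -/
  div_finite : {d : M | LDvd d Δ}.Finite

/-- A word `s_1|…|s_p` (with entries in `Div(Δ)`) is `Δ`-normal if, for every `i < p` and
every `s ∈ Div(Δ)`, `s_i ≺ s` implies that `s` does not left-divide `s_i s_{i+1} ⋯ s_p`. -/
def DNormal {M : Type*} [Monoid M] (G : GarsideMonoid M) (L : List M) : Prop :=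
  ∀ i : ℕ, i + 1 < L.length → ∀ s : M, LDvd s G.Δ →
    LDvd (L.getD i 1) s → L.getD i 1 ≠ s → ¬ LDvd s ((L.drop i).prod)

namespace LDvd

variable {M : Type*} [Monoid M] {a b c : M}

theorem trans : LDvd a b → LDvd b c → LDvd a c
  | ⟨x, hx⟩, ⟨y, hy⟩ => ⟨x * y, by rw [← mul_assoc, hx, hy]⟩

theorem mul_right : LDvd a b → ∀ c, LDvd a (b * c)
  | ⟨x, hx⟩, c => ⟨x * c, by rw [← mul_assoc, hx]⟩

end LDvd

theorem ldvd_mul_right {M : Type*} [Monoid M] (a b : M) : LDvd a (a * b) := ⟨b, rfl⟩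

namespace GarsideMonoid

variable {M : Type*} [Monoid M]

theorem lam_one (G : GarsideMonoid M) : G.lam 1 = 0 := by
  have := G.lam_superadd 1 1
  rw [mul_one] at this
  omega

theorem eq_one_of_mul_eq_one_left (G : GarsideMonoid M) {u v : M} (h : u * v = 1) : u = 1 := by
  by_contra hu
  have := G.lam_superadd u v
  rw [h, G.lam_one] at this
  exact G.lam_ne_zero u hu (by omega)

theorem ldvd_antisymm (G : GarsideMonoid M) {a b : M} : LDvd a b → LDvd b a → a = b
  | ⟨u, hu⟩, ⟨v, hv⟩ => by
    have huv : u * v = 1 := G.mul_left_cancel a _ _ (by rw [← mul_assoc, hu, hv, mul_one])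
    rw [← hu, G.eq_one_of_mul_eq_one_left huv, mul_one]

theorem ldvd_of_mul_ldvd_mul_left (G : GarsideMonoid M) {t u x : M} :
    LDvd (t * u) (t * x) → LDvd u x
  | ⟨c, hc⟩ => ⟨c, G.mul_left_cancel t _ _ (by rw [← mul_assoc, hc])⟩

theorem ldvd_Δ_of_mul_ldvd_Δ (G : GarsideMonoid M) {t u : M} (h : LDvd (t * u) G.Δ) :
    LDvd u G.Δ := by
  obtain ⟨c, hc⟩ := (G.ldvd_iff_rdvd _).1 h
  exact (G.ldvd_iff_rdvd u).2 ⟨c * t, by rw [mul_assoc, hc]⟩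

theorem dNormal_pair_iff (G : GarsideMonoid M) {a b : M} (ha : LDvd a G.Δ) :
    DNormal G [a, b] ↔ ∀ s, LDvd s G.Δ → LDvd s (a * b) → LDvd s a := by
  constructor
  · intro hab s hs hsab
    obtain ⟨m, ham, hsm, hmin⟩ := G.exists_right_lcm a s
    by_cases h : a = m
    · exact h ▸ hsm
    · have hmab : LDvd m (a * b) := hmin _ (ldvd_mul_right a b) hsab
      exact (hab 0 (by simp) m (hmin _ ha hs) ham h (by simpa using hmab)).elim
  · intro hab i hi s hs has hne hsab
    obtain rfl : i = 0 := by simp at hi; omega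
    exact hne (G.ldvd_antisymm has (hab s hs (by simpa using hsab)))

theorem ldvd_mul_of_ldvd_mul_of_forall_ldvd (G : GarsideMonoid M) {t s x y : M}
    (ht : LDvd t G.Δ) (hs : LDvd s G.Δ)
    (hxy : ∀ u, LDvd u G.Δ → LDvd u x → LDvd u y) (hsx : LDvd s (t * x)) :
    LDvd s (t * y) := by
  obtain ⟨m, ⟨u, rfl⟩, hsm, hmin⟩ := G.exists_right_lcm t s
  have hu : LDvd u G.Δ := G.ldvd_Δ_of_mul_ldvd_Δ (hmin _ ht hs)
  have hux : LDvd u x := G.ldvd_of_mul_ldvd_mul_left (hmin _ (ldvd_mul_right t x) hsx)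
  obtain ⟨w, hw⟩ := hxy u hu hux
  exact hsm.trans ⟨w, by rw [mul_assoc, hw]⟩

end GarsideMonoid

theorem garsideMonoid_left_domino_rule_general {M : Type*} [Monoid M] (G : GarsideMonoid M)
    (s₁ s₂ s₁' s₂' t₀ t₁ t₂ : M)
    (hs₁ : LDvd s₁ G.Δ) (hs₁' : LDvd s₁' G.Δ)
    (ht₀ : LDvd t₀ G.Δ)
    (e₁ : s₁' * t₁ = t₀ * s₁) (e₂ : s₂' * t₂ = t₁ * s₂)
    (n₁ : DNormal G [s₁, s₂]) (n₂ : DNormal G [s₁', t₁]) :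
    DNormal G [s₁', s₂'] := by
  rw [G.dNormal_pair_iff hs₁] at n₁
  rw [G.dNormal_pair_iff hs₁'] at n₂ ⊢
  intro s hs hss
  have hs_t₀s₁s₂ : LDvd s (t₀ * (s₁ * s₂)) := by
    rw [← mul_assoc, ← e₁, mul_assoc, ← e₂, ← mul_assoc]
    exact hss.mul_right t₂
  exact n₂ s hs (e₁ ▸ G.ldvd_mul_of_ldvd_mul_of_forall_ldvd ht₀ hs n₁ hs_t₀s₁s₂)

/-- In a Garside monoid `(M, Δ)`, the left domino rule is valid for
`Δ`-normal words of length two. -/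
theorem garsideMonoid_left_domino_rule {M : Type*} [Monoid M] (G : GarsideMonoid M)
    (s₁ s₂ s₁' s₂' t₀ t₁ t₂ : M)
    (hs₁ : LDvd s₁ G.Δ) (hs₂ : LDvd s₂ G.Δ) (hs₁' : LDvd s₁' G.Δ) (hs₂' : LDvd s₂' G.Δ)
    (ht₀ : LDvd t₀ G.Δ) (ht₁ : LDvd t₁ G.Δ) (ht₂ : LDvd t₂ G.Δ)
    (e₁ : s₁' * t₁ = t₀ * s₁) (e₂ : s₂' * t₂ = t₁ * s₂)
    (n₁ : DNormal G [s₁, s₂]) (n₂ : DNormal G [s₁', t₁]) (n₃ : DNormal G [s₂', t₂]) :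
    DNormal G [s₁', s₂'] :=
  garsideMonoid_left_domino_rule_general G s₁ s₂ s₁' s₂' t₀ t₁ t₂ hs₁ hs₁' ht₀ e₁ e₂ n₁ n₂
end

section
/- Let S be a set and F a map from length-two words over S to length-two words over S such that F is idempotent (F ∘ F = F) and F_{212} = F_{2121} = F_{1212} as maps on words of length 3 (where F_i applies F at positions i, i+1 and F_{i_1|…|i_n} := F_{i_n} ∘ ⋯ ∘ F_{i_1}). Then there exists a quadratic normalisation (S, N) of class (4, 3) whose restriction N̄ to length-two words equals F. -/
/-- A normalisation `(S, N)`: a length-preserving map `N : S* → S*` fixing the letters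
and compatible with itself on factors. -/
structure Normalisation (S : Type*) where
  /-- The normalisation map. -/
  N : List S → List S
  length_eq : ∀ w : List S, (N w).length = w.length
  single : ∀ s : S, N [s] = [s]
  compat : ∀ u w v : List S, N (u ++ N w ++ v) = N (u ++ w ++ v)

/-- The restriction `N̄` of `N` to length-two words, as a map on pairs. -/
def Normalisation.pair {S : Type*} (Q : Normalisation S) (p : S × S) : S × S :=
  match Q.N [p.1, p.2] with
  | [a, b] => (a, b)
  | _ => p

/-- Apply `F` to the entries at (1-based) positions `i, i+1` of a word. -/
def applyAt {α : Type*} (F : α × α → α × α) : ℕ → List α → List α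
  | 1, a :: b :: t => (F (a, b)).1 :: (F (a, b)).2 :: t
  | n + 2, a :: t => a :: applyAt F (n + 1) t
  | _, l => l

/-- Apply `F` successively at the positions listed in `u` (leftmost entry first):
`F_u = F_{i_n} ∘ ⋯ ∘ F_{i_1}` for `u = i_1|…|i_n`. -/
def applySeq {α : Type*} (F : α × α → α × α) (u : List ℕ) (w : List α) : List α :=
  u.foldl (fun v i => applyAt F i v) w

/-- `altSeq s m` is the alternating sequence of `1`s and `2`s of length `m` starting
with `s`: `altSeq 1 m = 121⋯[m]` and `altSeq 2 m = 212⋯[m]`. -/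
def altSeq : ℕ → ℕ → List ℕ
  | _, 0 => []
  | s, m + 1 => s :: altSeq (3 - s) m

/-- A normalisation is quadratic if (i) a word is `N`-normal iff all its length-two
factors are, and (ii) `N(w)` is always obtained by applying `N̄` at finitely many
positions. -/
def Normalisation.Quadratic {S : Type*} (Q : Normalisation S) : Prop :=
  (∀ w : List S, Q.N w = w ↔
    ∀ u v : List S, ∀ a b : S, w = u ++ [a, b] ++ v → Q.N [a, b] = [a, b]) ∧
  (∀ w : List S, ∃ u : List ℕ, Q.N w = applySeq Q.pair u w)

/-- `(S, N)` is of left class `c`: `N(w) = N̄_{121⋯[c]}(w)` for every length-3 word. -/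
def Normalisation.LeftClass {S : Type*} (Q : Normalisation S) (c : ℕ) : Prop :=
  ∀ w : List S, w.length = 3 → Q.N w = applySeq Q.pair (altSeq 1 c) w

/-- `(S, N)` is of right class `c`: `N(w) = N̄_{212⋯[c]}(w)` for every length-3 word. -/
def Normalisation.RightClass {S : Type*} (Q : Normalisation S) (c : ℕ) : Prop :=
  ∀ w : List S, w.length = 3 → Q.N w = applySeq Q.pair (altSeq 2 c) w

/-! The normalisation is computed from right to left: the normal form of `a · w` is obtained by
pushing the letter `a` through the normal form of `w`, applying `F` at positions `1, 2, …`.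
On a word `a b c` this is `F_{212}`, so the class is `(4, 3)` once `F_{212} = F_{1212}`.
That relation also says that pushing `b` and then `a` is the same as pushing the two letters
of `F(a, b)`; together with idempotence on words of length two this lets normal forms of
factors be substituted, which is the compatibility axiom. The relation `F_{212} = F_{2121}`
says that pushing a letter into an `F`-normal word leaves its first two letters `F`-normal, so
normal forms are exactly the words with `F`-normal length-two factors. -/

section

variable {α : Type*} {F : α × α → α × α}

@[simp] lemma applyAt_one_cons_cons (a b : α) (t : List α) :
    applyAt F 1 (a :: b :: t) = (F (a, b)).1 :: (F (a, b)).2 :: t := rfl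

lemma applyAt_add_one_cons {i : ℕ} (hi : 1 ≤ i) (a : α) (t : List α) :
    applyAt F (i + 1) (a :: t) = a :: applyAt F i t := by
  obtain ⟨n, rfl⟩ := Nat.exists_eq_add_of_le' hi
  rfl

@[simp] lemma applySeq_nil (w : List α) : applySeq F [] w = w := rfl

@[simp] lemma applySeq_cons (i : ℕ) (u : List ℕ) (w : List α) :
    applySeq F (i :: u) w = applySeq F u (applyAt F i w) := rfl

lemma applySeq_append (u v : List ℕ) (w : List α) :
    applySeq F (u ++ v) w = applySeq F v (applySeq F u w) :=
  List.foldl_append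

lemma applySeq_map_add_one_cons {u : List ℕ} (hu : ∀ i ∈ u, 1 ≤ i) (a : α) (w : List α) :
    applySeq F (u.map (· + 1)) (a :: w) = a :: applySeq F u w := by
  induction u generalizing w with
  | nil => rfl
  | cons i u ih =>
    rw [List.map_cons, applySeq_cons, applySeq_cons, applyAt_add_one_cons (hu i (by simp)),
      ih (fun j hj => hu j (by simp [hj]))]

def pushLeft (F : α × α → α × α) : α → List α → List α
  | a, [] => [a]
  | a, b :: t => (F (a, b)).1 :: pushLeft F (F (a, b)).2 t

def pushNormal (F : α × α → α × α) (w : List α) : List α :=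
  w.foldr (pushLeft F) []

abbrev IsNormalPair (F : α × α → α × α) (a b : α) : Prop :=
  F (a, b) = (a, b)

@[simp] lemma pushLeft_nil (a : α) : pushLeft F a [] = [a] := rfl

@[simp] lemma pushLeft_cons (a b : α) (t : List α) :
    pushLeft F a (b :: t) = (F (a, b)).1 :: pushLeft F (F (a, b)).2 t := rfl

@[simp] lemma pushNormal_nil : pushNormal F ([] : List α) = [] := rfl

@[simp] lemma pushNormal_cons (a : α) (w : List α) :
    pushNormal F (a :: w) = pushLeft F a (pushNormal F w) := rfl

lemma pushNormal_pair (a b : α) : pushNormal F [a, b] = [(F (a, b)).1, (F (a, b)).2] := rfl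

lemma pushNormal_pair_eq_self_iff (a b : α) :
    pushNormal F [a, b] = [a, b] ↔ IsNormalPair F a b := by
  simp [Prod.ext_iff]

lemma pushNormal_triple (a b c : α) :
    pushNormal F [a, b, c] = applySeq F (altSeq 2 3) [a, b, c] := rfl

lemma length_pushLeft (a : α) (v : List α) : (pushLeft F a v).length = v.length + 1 := by
  induction v generalizing a with
  | nil => rfl
  | cons b t ih => simp [ih]

lemma length_pushNormal (w : List α) : (pushNormal F w).length = w.length := by
  induction w with
  | nil => rfl
  | cons a w ih => simp [length_pushLeft, ih]

lemma pushLeft_eq_applySeq_range' (a : α) (v : List α) :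
    pushLeft F a v = applySeq F (List.range' 1 v.length) (a :: v) := by
  induction v generalizing a with
  | nil => rfl
  | cons b t ih =>
    have hpos : ∀ i ∈ List.range' 1 t.length, 1 ≤ i := fun i hi => (List.mem_range'_1.1 hi).1
    rw [pushLeft_cons, ih, ← applySeq_map_add_one_cons hpos, List.length_cons, List.range'_succ,
      applySeq_cons, applyAt_one_cons_cons]
    congr 1
    simpa [add_comm] using List.map_add_range' (a := 1) 1 t.length 1

lemma exists_pushNormal_eq_applySeq (w : List α) :
    ∃ u : List ℕ, (∀ i ∈ u, 1 ≤ i) ∧ pushNormal F w = applySeq F u w := by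
  induction w with
  | nil => exact ⟨[], by simp⟩
  | cons a w ih =>
    obtain ⟨u, hu, hw⟩ := ih
    refine ⟨u.map (· + 1) ++ List.range' 1 w.length, ?_, ?_⟩
    · simp only [List.mem_append, List.mem_map, List.mem_range'_1]
      rintro i (⟨j, -, rfl⟩ | ⟨hi, -⟩) <;> omega
    · rw [pushNormal_cons, pushLeft_eq_applySeq_range', length_pushNormal, applySeq_append,
        applySeq_map_add_one_cons hu, hw]

lemma pushNormal_append (x y : List α) :
    pushNormal F (x ++ y) = x.foldr (pushLeft F) (pushNormal F y) :=
  List.foldr_append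

lemma pushLeft_pushLeft (hidem : F ∘ F = F)
    (h1212 : ∀ w : List α, w.length = 3 → applySeq F (altSeq 2 3) w = applySeq F (altSeq 1 4) w)
    (a b : α) (u : List α) :
    pushLeft F a (pushLeft F b u) = pushLeft F (F (a, b)).1 (pushLeft F (F (a, b)).2 u) := by
  induction u generalizing a b with
  | nil =>
    simp only [pushLeft_nil, pushLeft_cons, Prod.mk.eta]
    rw [← Function.comp_apply (f := F) (g := F), hidem]
  | cons c t ih =>
    have habc := h1212 [a, b, c] rfl
    simp only [altSeq, Nat.reduceSub, applySeq_cons, applyAt_one_cons_cons,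
      applyAt_add_one_cons le_rfl, applySeq_nil, List.cons.injEq, and_true] at habc
    simp only [pushLeft_cons]
    conv_lhs => rw [ih]
    conv_rhs => rw [ih]
    rw [habc.1, habc.2.1, habc.2.2]

lemma foldr_pushLeft_pushLeft (hidem : F ∘ F = F)
    (h1212 : ∀ w : List α, w.length = 3 → applySeq F (altSeq 2 3) w = applySeq F (altSeq 1 4) w)
    (a : α) (v z : List α) :
    (pushLeft F a v).foldr (pushLeft F) z = (a :: v).foldr (pushLeft F) z := by
  induction v generalizing a with
  | nil => rfl
  | cons b t ih =>
    rw [pushLeft_cons, List.foldr_cons, ih, List.foldr_cons, List.foldr_cons, List.foldr_cons,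
      pushLeft_pushLeft hidem h1212 a b]

lemma foldr_pushLeft_pushNormal (hidem : F ∘ F = F)
    (h1212 : ∀ w : List α, w.length = 3 → applySeq F (altSeq 2 3) w = applySeq F (altSeq 1 4) w)
    (w z : List α) :
    (pushNormal F w).foldr (pushLeft F) z = w.foldr (pushLeft F) z := by
  induction w generalizing z with
  | nil => rfl
  | cons a w ih =>
    rw [pushNormal_cons, foldr_pushLeft_pushLeft hidem h1212, List.foldr_cons, ih]
    rfl

lemma pushNormal_append_pushNormal_append (hidem : F ∘ F = F)
    (h1212 : ∀ w : List α, w.length = 3 → applySeq F (altSeq 2 3) w = applySeq F (altSeq 1 4) w)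
    (u w v : List α) :
    pushNormal F (u ++ pushNormal F w ++ v) = pushNormal F (u ++ w ++ v) := by
  rw [List.append_assoc, List.append_assoc, pushNormal_append, pushNormal_append,
    pushNormal_append, pushNormal_append, foldr_pushLeft_pushNormal hidem h1212]

lemma isChain_pushLeft (hidem : F ∘ F = F)
    (h2121 : ∀ w : List α, w.length = 3 → applySeq F (altSeq 2 3) w = applySeq F (altSeq 2 4) w)
    (a : α) {v : List α} (hv : v.IsChain (IsNormalPair F)) :
    (pushLeft F a v).IsChain (IsNormalPair F) := by
  induction v generalizing a with
  | nil => simp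
  | cons b t ih =>
    cases t with
    | nil =>
      simp only [pushLeft_cons, pushLeft_nil, List.isChain_cons_cons, List.IsChain.singleton,
        and_true, IsNormalPair, Prod.mk.eta]
      rw [← Function.comp_apply (f := F) (g := F), hidem]
    | cons c t =>
      obtain ⟨hbc, hct⟩ := List.isChain_cons_cons.1 hv
      have habc := h2121 [a, b, c] rfl
      simp only [altSeq, Nat.reduceSub, applySeq_cons, applyAt_one_cons_cons,
        applyAt_add_one_cons le_rfl, applySeq_nil, List.cons.injEq, hbc] at habc
      have hpush := ih (F (a, b)).2 hct
      simp only [pushLeft_cons] at hpush ⊢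
      exact List.isChain_cons_cons.2 ⟨Prod.ext habc.1.symm habc.2.1.symm, hpush⟩

lemma isChain_pushNormal (hidem : F ∘ F = F)
    (h2121 : ∀ w : List α, w.length = 3 → applySeq F (altSeq 2 3) w = applySeq F (altSeq 2 4) w)
    (w : List α) : (pushNormal F w).IsChain (IsNormalPair F) := by
  induction w with
  | nil => simp
  | cons a w ih => exact isChain_pushLeft hidem h2121 a ih

lemma pushLeft_of_isChain {a : α} {v : List α} (hv : (a :: v).IsChain (IsNormalPair F)) :
    pushLeft F a v = a :: v := by
  induction v generalizing a with
  | nil => rfl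
  | cons b t ih =>
    obtain ⟨hab, hbt⟩ := List.isChain_cons_cons.1 hv
    rw [pushLeft_cons, hab, ih hbt]

lemma pushNormal_of_isChain {w : List α} (hw : w.IsChain (IsNormalPair F)) :
    pushNormal F w = w := by
  induction w with
  | nil => rfl
  | cons a w ih => rw [pushNormal_cons, ih hw.tail, pushLeft_of_isChain hw]

lemma pushNormal_eq_self_iff (hidem : F ∘ F = F)
    (h2121 : ∀ w : List α, w.length = 3 → applySeq F (altSeq 2 3) w = applySeq F (altSeq 2 4) w)
    (w : List α) : pushNormal F w = w ↔ w.IsChain (IsNormalPair F) :=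
  ⟨fun hw => hw ▸ isChain_pushNormal hidem h2121 w, pushNormal_of_isChain⟩

def pushNormalisation (F : α × α → α × α) (hidem : F ∘ F = F)
    (h1212 : ∀ w : List α, w.length = 3 → applySeq F (altSeq 2 3) w = applySeq F (altSeq 1 4) w) :
    Normalisation α where
  N := pushNormal F
  length_eq := length_pushNormal
  single _ := rfl
  compat := pushNormal_append_pushNormal_append hidem h1212

section pushNormalisation

variable {hidem : F ∘ F = F}
  {h1212 : ∀ w : List α, w.length = 3 → applySeq F (altSeq 2 3) w = applySeq F (altSeq 1 4) w}

lemma pushNormalisation_quadratic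
    (h2121 : ∀ w : List α, w.length = 3 → applySeq F (altSeq 2 3) w = applySeq F (altSeq 2 4) w) :
    (pushNormalisation F hidem h1212).Quadratic := by
  refine ⟨fun w => ?_, fun w => ?_⟩
  · change pushNormal F w = w ↔ ∀ u v a b, w = u ++ [a, b] ++ v → pushNormal F [a, b] = [a, b]
    simp only [pushNormal_eq_self_iff hidem h2121 w,
      List.isChain_iff_forall_rel_of_append_cons_cons, pushNormal_pair_eq_self_iff,
      List.append_assoc, List.cons_append, List.nil_append]
    exact ⟨fun hw u v a b => @hw a b u v, fun hw a b u v => hw u v a b⟩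
  · obtain ⟨u, -, hu⟩ := exists_pushNormal_eq_applySeq (F := F) w
    exact ⟨u, hu⟩

lemma pushNormalisation_rightClass_three : (pushNormalisation F hidem h1212).RightClass 3 := by
  intro w hw
  obtain ⟨a, b, c, rfl⟩ := List.length_eq_three.1 hw
  exact pushNormal_triple a b c

lemma pushNormalisation_leftClass_four : (pushNormalisation F hidem h1212).LeftClass 4 := by
  intro w hw
  obtain ⟨a, b, c, rfl⟩ := List.length_eq_three.1 hw
  exact (pushNormal_triple a b c).trans (h1212 _ hw)

end pushNormalisation

end

/-- If `F` is an idempotent map on length-two words over `S` satisfying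
`F_{212} = F_{2121} = F_{1212}` on length-3 words, then there exists a quadratic
normalisation `(S, N)` of class `(4, 3)` whose restriction to length-two words is `F`. -/
theorem exists_quadratic_class43_of_idempotent {S : Type*} (F : S × S → S × S)
    (hidem : F ∘ F = F)
    (hrel : ∀ w : List S, w.length = 3 →
      applySeq F (altSeq 2 3) w = applySeq F (altSeq 2 4) w ∧
      applySeq F (altSeq 2 4) w = applySeq F (altSeq 1 4) w) :
    ∃ Q : Normalisation S, Q.Quadratic ∧ Q.LeftClass 4 ∧ Q.RightClass 3 ∧
      ∀ a b : S, Q.N [a, b] = [(F (a, b)).1, (F (a, b)).2] := by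
  have h1212 : ∀ w : List S, w.length = 3 → applySeq F (altSeq 2 3) w = applySeq F (altSeq 1 4) w :=
    fun w hw => (hrel w hw).1.trans (hrel w hw).2
  exact ⟨pushNormalisation F hidem h1212, pushNormalisation_quadratic fun w hw => (hrel w hw).1,
    pushNormalisation_leftClass_four, pushNormalisation_rightClass_three, pushNormal_pair⟩
end
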